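/- arXiv:2005.11654 — 5 statements merged into one kernel-verified Lean document; each statement's English description precedes it below -/
import Mathlib

section
/- Let p ≥ 1, let b_1, …, b_n ∈ ℤ^d be linearly independent, let t ∈ ℤ^d, let α > 0, and let L' ⊂ ℝ^{d+1} be the lattice generated by (b_1, 0), …, (b_n, 0), (t, α). Suppose there exists v ∈ L = L(b_1, …, b_n) with ‖v − t‖_p ≤ r, and suppose v_1, …, v_n ∈ L are linearly independent with ‖v_i‖_p ≤ λ for all i. Then the vectors (v_1,0), …, (v_n,0) together with (t, α) − (v, 0) = (t − v, α) are n+1 linearly independent elements of L', and each has ℓ_p norm at most max(λ, (r^p + α^p)^{1/p}). In particular λ_{n+1}^{(p)}(L')^p ≤ max(λ^p, r^p + α^p). -/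
/-- The ℓ_p "norm" of a vector `x ∈ ℝ^d`: `(∑ i, |x i| ^ p) ^ (1/p)`. -/
noncomputable def lpNorm (p : ℝ) {d : ℕ} (x : Fin d → ℝ) : ℝ :=
  (∑ i, |x i| ^ p) ^ (1 / p)

/-- Membership in the lattice generated by the vectors `b 0, …, b (n-1)`. -/
def inLattice {n d : ℕ} (b : Fin n → Fin d → ℝ) (v : Fin d → ℝ) : Prop :=
  ∃ z : Fin n → ℤ, v = ∑ i, (z i : ℝ) • b i

/-- The `k`-th successive minimum (in the ℓ_p norm) of the lattice generated by `b`. -/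
noncomputable def succMin (p : ℝ) {n d : ℕ} (b : Fin n → Fin d → ℝ) (k : ℕ) : ℝ :=
  sInf {ℓ : ℝ | ∃ v : Fin k → Fin d → ℝ,
    LinearIndependent ℝ v ∧ (∀ i, inLattice b (v i)) ∧ ∀ i, lpNorm p (v i) ≤ ℓ}

/-- The linear map appending a `0` coordinate. -/
noncomputable def snocZero (d : ℕ) : (Fin d → ℝ) →ₗ[ℝ] (Fin (d + 1) → ℝ) where
  toFun x := Fin.snoc x 0
  map_add' x y := by
    funext j
    refine Fin.lastCases ?_ (fun j => ?_) j <;> simp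
  map_smul' c x := by
    funext j
    refine Fin.lastCases ?_ (fun j => ?_) j <;> simp

lemma snocZero_apply {d : ℕ} (x : Fin d → ℝ) :
    snocZero d x = Fin.snoc x 0 := rfl

lemma snocZero_ker (d : ℕ) : LinearMap.ker (snocZero d) = ⊥ := by
  rw [LinearMap.ker_eq_bot']
  intro x hx
  funext j
  have := congrFun hx (Fin.castSucc j)
  simpa [snocZero_apply] using this

lemma lpNorm_snoc (p : ℝ) {d : ℕ} (x : Fin d → ℝ) (c : ℝ) :
    lpNorm p (Fin.snoc x c) = (∑ j, |x j| ^ p + |c| ^ p) ^ (1 / p) := by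
  unfold lpNorm
  rw [Fin.sum_univ_castSucc]
  simp

/-- YES case of the reduction: let `L'` be the lattice generated by
`(b_1,0), …, (b_n,0), (t,α)` (the family `w`).  If `v ∈ L = L(b_1,…,b_n)` satisfies
`‖v − t‖_p ≤ r` and `v_1, …, v_n ∈ L` are linearly independent with `‖v_i‖_p ≤ λ`,
then the vectors `(v_1,0), …, (v_n,0), (t − v, α)` (the family `u`) are linearly
independent elements of `L'`, each of ℓ_p norm at most `max(λ, (r^p+α^p)^{1/p})`.
In particular `λ_{n+1}^{(p)}(L')^p ≤ max(λ^p, r^p + α^p)`. -/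
theorem stmt3 (p : ℝ) (hp : 1 ≤ p) (n d : ℕ)
    (b : Fin n → Fin d → ℤ)
    (hb : LinearIndependent ℝ (fun i : Fin n => fun j : Fin d => (b i j : ℝ)))
    (t : Fin d → ℤ) (α : ℝ) (hα : 0 < α) (r lam : ℝ)
    (w : Fin (n + 1) → Fin (d + 1) → ℝ)
    (hw : w = Fin.snoc (fun i : Fin n => Fin.snoc (fun j => (b i j : ℝ)) (0 : ℝ))
      (Fin.snoc (fun j => (t j : ℝ)) α))
    (v : Fin d → ℝ)
    (hv : inLattice (fun i : Fin n => fun j : Fin d => (b i j : ℝ)) v)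
    (hvt : lpNorm p (v - fun j => (t j : ℝ)) ≤ r)
    (vs : Fin n → Fin d → ℝ) (hvs : LinearIndependent ℝ vs)
    (hvsL : ∀ i, inLattice (fun i : Fin n => fun j : Fin d => (b i j : ℝ)) (vs i))
    (hvsN : ∀ i, lpNorm p (vs i) ≤ lam)
    (u : Fin (n + 1) → Fin (d + 1) → ℝ)
    (hu : u = Fin.snoc (fun i : Fin n => Fin.snoc (vs i) (0 : ℝ))
      (Fin.snoc ((fun j => (t j : ℝ)) - v) α)) :
    LinearIndependent ℝ u ∧
    (∀ i, inLattice w (u i)) ∧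
    (∀ i, lpNorm p (u i) ≤ max lam ((r ^ p + α ^ p) ^ (1 / p))) ∧
    succMin p w (n + 1) ^ p ≤ max (lam ^ p) (r ^ p + α ^ p) := by
  have hp0 : (0:ℝ) < p := lt_of_lt_of_le one_pos hp
  have hpne : p ≠ 0 := ne_of_gt hp0
  have hvsf : (fun i => (Fin.snoc (vs i) 0 : Fin (d+1) → ℝ)) = ⇑(snocZero d) ∘ vs := rfl
  -- Part 1 : linear independence
  have h1 : LinearIndependent ℝ u := by
    rw [hu, hvsf]
    refine linearIndependent_fin_snoc.mpr ⟨hvs.map' _ (snocZero_ker d), ?_⟩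
    intro hmem
    have hsub : Set.range (⇑(snocZero d) ∘ vs) ⊆
        (LinearMap.ker (LinearMap.proj (Fin.last d) :
          (Fin (d+1) → ℝ) →ₗ[ℝ] ℝ) : Submodule ℝ _) := by
      rintro _ ⟨i, rfl⟩
      simp [snocZero_apply, LinearMap.mem_ker]
    have h := (Submodule.span_le.mpr hsub) hmem
    simp only [LinearMap.mem_ker, LinearMap.proj_apply] at h
    rw [Fin.snoc_last] at h
    exact absurd h (ne_of_gt hα)
  -- Part 2 : lattice membership
  have h2 : ∀ i, inLattice w (u i) := by
    intro i
    induction i using Fin.lastCases with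
    | last =>
      obtain ⟨z, hz⟩ := hv
      refine ⟨Fin.snoc (fun i => -z i) 1, ?_⟩
      rw [hu, hw, Fin.snoc_last, Fin.sum_univ_castSucc]
      simp only [Fin.snoc_castSucc, Fin.snoc_last, Int.cast_neg, Int.cast_one, one_smul]
      have hsum : (∑ i : Fin n, (-(z i : ℝ)) • (Fin.snoc (fun j => (b i j : ℝ)) 0 :
          Fin (d+1) → ℝ)) = snocZero d (-v) := by
        rw [map_neg]
        rw [show (snocZero d) v = ∑ i : Fin n, (z i : ℝ) •
            (Fin.snoc (fun j => (b i j : ℝ)) 0 : Fin (d+1) → ℝ) by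
          rw [hz, map_sum]; simp [snocZero_apply]]
        simp [neg_smul, Finset.sum_neg_distrib]
      rw [hsum, snocZero_apply]
      funext j
      refine Fin.lastCases ?_ (fun j => ?_) j <;>
        simp [sub_eq_neg_add]
    | cast k =>
      obtain ⟨z, hz⟩ := hvsL k
      refine ⟨Fin.snoc z 0, ?_⟩
      rw [hu, hw, Fin.snoc_castSucc, Fin.sum_univ_castSucc]
      simp only [Fin.snoc_castSucc, Fin.snoc_last, Int.cast_zero, zero_smul, add_zero]
      have : (∑ i : Fin n, (z i : ℝ) • (Fin.snoc (fun j => (b i j : ℝ)) 0 :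
          Fin (d+1) → ℝ)) = snocZero d (vs k) := by
        rw [hz, map_sum]
        simp [snocZero_apply]
      rw [this, snocZero_apply]
  -- nonnegativity facts
  have habs : ∀ {m : ℕ} (x : Fin m → ℝ), (0:ℝ) ≤ ∑ j, |x j| ^ p :=
    fun x => Finset.sum_nonneg fun j _ => Real.rpow_nonneg (abs_nonneg _) p
  have hlp_nonneg : ∀ {m : ℕ} (x : Fin m → ℝ), 0 ≤ lpNorm p x :=
    fun x => Real.rpow_nonneg (habs x) _
  have hr : 0 ≤ r := le_trans (hlp_nonneg _) hvt
  have hS : (∑ j, |(v - fun j => (t j : ℝ)) j| ^ p) ≤ r ^ p := by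
    have h := Real.rpow_le_rpow (hlp_nonneg _) hvt hp0.le
    rwa [lpNorm, ← Real.rpow_mul (habs _), one_div_mul_cancel hpne, Real.rpow_one] at h
  have hX : (0:ℝ) ≤ r ^ p + α ^ p :=
    add_nonneg (Real.rpow_nonneg hr p) (Real.rpow_nonneg hα.le p)
  -- Part 3 : norm bounds
  have h3 : ∀ i, lpNorm p (u i) ≤ max lam ((r ^ p + α ^ p) ^ (1 / p)) := by
    intro i
    induction i using Fin.lastCases with
    | last =>
      rw [hu, Fin.snoc_last, lpNorm_snoc]
      refine le_trans ?_ (le_max_right _ _)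
      refine Real.rpow_le_rpow
        (add_nonneg (habs _) (Real.rpow_nonneg (abs_nonneg _) p)) ?_ (by positivity)
      refine add_le_add ?_ ?_
      · refine le_trans (le_of_eq ?_) hS
        refine Finset.sum_congr rfl fun j _ => ?_
        simp [abs_sub_comm]
      · rw [abs_of_pos hα]
    | cast k =>
      rw [hu, Fin.snoc_castSucc, lpNorm_snoc]
      have h0 : (∑ j, |vs k j| ^ p + |(0:ℝ)| ^ p) = ∑ j, |vs k j| ^ p := by
        simp [Real.zero_rpow hpne]
      rw [h0]
      exact le_trans (hvsN k) (le_max_left _ _)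
  -- Part 4 : the successive minimum bound
  refine ⟨h1, h2, h3, ?_⟩
  set T : Set ℝ := {ℓ : ℝ | ∃ v : Fin (n+1) → Fin (d+1) → ℝ,
    LinearIndependent ℝ v ∧ (∀ i, inLattice w (v i)) ∧ ∀ i, lpNorm p (v i) ≤ ℓ} with hT
  have hEq : succMin p w (n+1) = sInf T := rfl
  have hMmem : max lam ((r ^ p + α ^ p) ^ (1 / p)) ∈ T := ⟨u, h1, h2, h3⟩
  have hlb : ∀ ℓ ∈ T, (0:ℝ) ≤ ℓ := by
    rintro ℓ ⟨v', -, -, hb'⟩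
    exact le_trans (hlp_nonneg (v' 0)) (hb' 0)
  have hinf_le : succMin p w (n+1) ≤ max lam ((r ^ p + α ^ p) ^ (1 / p)) := by
    rw [hEq]; exact csInf_le ⟨0, fun ℓ hℓ => hlb ℓ hℓ⟩ hMmem
  have hinf_nonneg : 0 ≤ succMin p w (n+1) := by
    rw [hEq]; exact le_csInf ⟨_, hMmem⟩ hlb
  refine le_trans (Real.rpow_le_rpow hinf_nonneg hinf_le hp0.le) ?_
  rcases le_total lam ((r ^ p + α ^ p) ^ (1 / p)) with h | h
  · rw [max_eq_right h, ← Real.rpow_mul hX, one_div_mul_cancel hpne, Real.rpow_one]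
    exact le_max_right _ _
  · rw [max_eq_left h]
    exact le_max_left _ _
end

section
/- Let p ≥ 1, let b_1, …, b_n ∈ ℤ^d be linearly independent, let t ∈ ℤ^d, let α > 0, let L = L(b_1, …, b_n), and let L' ⊂ ℝ^{d+1} be the lattice generated by (b_1, 0), …, (b_n, 0), (t, α). Suppose every v ∈ L satisfies ‖v − t‖_p > R. Then every x ∈ L' of the form x = Σ_i z_i (b_i, 0) + z (t, α) with z ∈ {1, −1} satisfies ‖x‖_p^p > R^p + α^p. -/
/-- NO case, coefficient `±1`: if every `v ∈ L = L(b_1,…,b_n)` satisfies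
`‖v − t‖_p > R` (with `R ≥ 0` a distance threshold), then every vector of the lattice
`L'` generated by `(b_1,0), …, (b_n,0), (t,α)` of the form
`x = Σ_i z_i (b_i, 0) + z (t, α)` with `z ∈ {1, −1}` satisfies `‖x‖_p^p > R^p + α^p`. -/
theorem stmt5 (p : ℝ) (hp : 1 ≤ p) (n d : ℕ)
    (b : Fin n → Fin d → ℤ)
    (hb : LinearIndependent ℝ (fun i : Fin n => fun j : Fin d => (b i j : ℝ)))
    (t : Fin d → ℤ) (α : ℝ) (hα : 0 < α) (R : ℝ) (hR : 0 ≤ R)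
    (hfar : ∀ v : Fin d → ℝ,
      inLattice (fun i : Fin n => fun j : Fin d => (b i j : ℝ)) v →
      R < lpNorm p (v - fun j => (t j : ℝ))) :
    ∀ (z : Fin n → ℤ) (c : ℤ), c = 1 ∨ c = -1 →
      R ^ p + α ^ p <
        lpNorm p ((∑ j, (z j : ℝ) •
            (Fin.snoc (fun k => (b j k : ℝ)) (0 : ℝ) : Fin (d + 1) → ℝ)) +
          (c : ℝ) • (Fin.snoc (fun k => (t k : ℝ)) α : Fin (d + 1) → ℝ)) ^ p := by
  intro z c hc
  have hp0 : 0 < p := lt_of_lt_of_le one_pos hp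
  set w : Fin d → ℝ := fun k => (∑ j, (z j : ℝ) * (b j k : ℝ)) + (c : ℝ) * t k with hw
  have hx : ((∑ j, (z j : ℝ) •
      (Fin.snoc (fun k => (b j k : ℝ)) (0 : ℝ) : Fin (d + 1) → ℝ)) +
      (c : ℝ) • (Fin.snoc (fun k => (t k : ℝ)) α : Fin (d + 1) → ℝ))
      = Fin.snoc w ((c : ℝ) * α) := by
    funext i
    refine Fin.lastCases ?_ ?_ i
    · simp [Finset.sum_apply]
    · intro k
      simp [Finset.sum_apply, hw]
  rw [hx]
  have habs : |(c : ℝ)| = 1 := by rcases hc with h | h <;> simp [h]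
  have hS : 0 ≤ ∑ k, |w k| ^ p :=
    Finset.sum_nonneg fun k _ => Real.rpow_nonneg (abs_nonneg _) p
  have key : R ^ p < ∑ k, |w k| ^ p := by
    -- apply hfar to an appropriate lattice vector
    have : ∃ v, inLattice (fun i : Fin n => fun j : Fin d => (b i j : ℝ)) v ∧
        ∀ k, |v k - (t k : ℝ)| = |w k| := by
      rcases hc with h | h
      · refine ⟨∑ i, ((-z i : ℤ) : ℝ) • fun j => (b i j : ℝ), ⟨fun i => -z i, rfl⟩, ?_⟩
        intro k
        rw [← abs_neg]
        congr 1
        simp [hw, h, Finset.sum_apply, Finset.sum_neg_distrib]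
        ring_nf
      · refine ⟨∑ i, ((z i : ℤ) : ℝ) • fun j => (b i j : ℝ), ⟨z, rfl⟩, ?_⟩
        intro k
        congr 1
        simp [hw, h, Finset.sum_apply]
        ring
    obtain ⟨v, hvL, hvw⟩ := this
    have hlt := hfar v hvL
    have hsum : lpNorm p (v - fun j => (t j : ℝ)) = (∑ k, |w k| ^ p) ^ (1 / p) := by
      unfold lpNorm
      congr 1
      refine Finset.sum_congr rfl fun k _ => ?_
      rw [show (v - fun j => (t j : ℝ)) k = v k - (t k : ℝ) from rfl, hvw k]
    rw [hsum] at hlt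
    have := Real.rpow_lt_rpow hR hlt hp0
    rwa [← Real.rpow_mul hS, one_div_mul_cancel hp0.ne', Real.rpow_one] at this
  have hnorm : lpNorm p (Fin.snoc w ((c : ℝ) * α)) ^ p
      = (∑ k, |w k| ^ p) + α ^ p := by
    unfold lpNorm
    have hS' : (0:ℝ) ≤ ∑ i : Fin (d + 1), |Fin.snoc w ((c : ℝ) * α) i| ^ p :=
      Finset.sum_nonneg fun i _ => Real.rpow_nonneg (abs_nonneg _) p
    rw [← Real.rpow_mul hS', one_div_mul_cancel hp0.ne', Real.rpow_one,
      Fin.sum_univ_castSucc]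
    simp [abs_mul, habs, abs_of_pos hα]
  rw [hnorm]
  linarith
end

section
/- Let p ≥ 1, γ ≥ 1, r > 0, let b_1, …, b_n ∈ ℤ^d be linearly independent, let t ∈ ℤ^d, let α > 0, let L = L(b_1, …, b_n), and let L' ⊂ ℝ^{d+1} be the lattice generated by (b_1, 0), …, (b_n, 0), (t, α). Suppose every v ∈ L satisfies ‖v − t‖_p > γ·r. Then every set of n+1 linearly independent vectors of L' contains at least one vector x with ‖x‖_p^p ≥ min(γ^p r^p + α^p, 2^p α^p). In particular λ_{n+1}^{(p)}(L')^p ≥ min(γ^p r^p + α^p, 2^p α^p). -/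
/-! A vector of `L'` has the form `(v + m t, m α)` with `v ∈ L` and `m ∈ ℤ`. Among `n + 1`
linearly independent vectors of `L'` some has `m ≠ 0`, because those with `m = 0` lie in the
`n`-dimensional span of the `(b_i, 0)`. If `m = ±1`, the first block is `±(v' - t)` for some
`v' ∈ L`, so the `p`-th power of the norm exceeds `(γ r)^p + α^p`; if `|m| ≥ 2`, the last
coordinate alone contributes `|m α|^p ≥ 2^p α^p`. -/

section LpNorm

variable {p : ℝ} {d : ℕ}

lemma lpNorm_nonneg (x : Fin d → ℝ) : 0 ≤ lpNorm p x :=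
  Real.rpow_nonneg (Finset.sum_nonneg fun _ _ => Real.rpow_nonneg (abs_nonneg _) p) _

lemma lpNorm_rpow_eq_sum (hp : p ≠ 0) (x : Fin d → ℝ) : lpNorm p x ^ p = ∑ i, |x i| ^ p := by
  rw [lpNorm, one_div,
    Real.rpow_inv_rpow (Finset.sum_nonneg fun _ _ => Real.rpow_nonneg (abs_nonneg _) p) hp]

lemma lpNorm_neg (x : Fin d → ℝ) : lpNorm p (-x) = lpNorm p x := by
  simp only [lpNorm, Pi.neg_apply, abs_neg]

lemma lpNorm_snoc_rpow (hp : p ≠ 0) (x : Fin d → ℝ) (a : ℝ) :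
    lpNorm p (Fin.snoc x a : Fin (d + 1) → ℝ) ^ p = lpNorm p x ^ p + |a| ^ p := by
  simp only [lpNorm_rpow_eq_sum hp, Fin.sum_univ_castSucc, Fin.snoc_castSucc, Fin.snoc_last]

end LpNorm

section Lattice

variable {n d : ℕ} {b : Fin n → Fin d → ℝ}

lemma inLattice_self (i : Fin n) : inLattice b (b i) :=
  ⟨Pi.single i 1, by simp [Pi.single_apply]⟩

lemma inLattice.neg {v : Fin d → ℝ} (hv : inLattice b v) : inLattice b (-v) := by
  obtain ⟨z, rfl⟩ := hv
  exact ⟨-z, by simp [Finset.sum_neg_distrib]⟩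

lemma le_succMin_rpow {p m : ℝ} {k : ℕ} (hp : 0 < p) (hm : 0 ≤ m)
    (hne : ∃ v : Fin k → Fin d → ℝ, LinearIndependent ℝ v ∧ ∀ i, inLattice b (v i))
    (h : ∀ u : Fin k → Fin d → ℝ, LinearIndependent ℝ u → (∀ i, inLattice b (u i)) →
      ∃ i, m ≤ lpNorm p (u i) ^ p) :
    m ≤ succMin p b k ^ p := by
  obtain ⟨v, hv, hvL⟩ := hne
  have hS : m ^ p⁻¹ ≤ succMin p b k := by
    refine le_csInf ⟨∑ i, lpNorm p (v i), v, hv, hvL, fun i =>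
      Finset.single_le_sum (fun j _ => lpNorm_nonneg (v j)) (Finset.mem_univ i)⟩ ?_
    rintro ℓ ⟨u, hu, huL, huℓ⟩
    obtain ⟨i, hi⟩ := h u hu huL
    rw [Real.rpow_inv_le_iff_of_pos hm ((lpNorm_nonneg _).trans (huℓ i)) hp]
    exact hi.trans (Real.rpow_le_rpow (lpNorm_nonneg _) (huℓ i) hp.le)
  rwa [← Real.rpow_inv_le_iff_of_pos hm ((Real.rpow_nonneg hm _).trans hS) hp]

end Lattice

lemma exists_coeff_last_ne_zero {K V : Type*} [DivisionRing K] [AddCommGroup V] [Module K V]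
    {n : ℕ} {u w : Fin (n + 1) → V} (hu : LinearIndependent K u)
    (c : Fin (n + 1) → Fin (n + 1) → K) (hc : ∀ i, u i = ∑ k, c i k • w k) :
    ∃ i, c i (Fin.last n) ≠ 0 := by
  classical
  by_contra! h
  have hspan : Set.range u ≤ Submodule.span K (Set.range (w ∘ Fin.castSucc)) := by
    rintro _ ⟨i, rfl⟩
    rw [hc i, Fin.sum_univ_castSucc, h i, zero_smul, add_zero]
    exact Submodule.sum_mem _ fun k _ => Submodule.smul_mem _ _ (Submodule.subset_span ⟨k, rfl⟩)
  have hcard := linearIndependent_le_span' u hu _ hspan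
  rw [Cardinal.mk_fintype, Fintype.card_fin, Nat.cast_le] at hcard
  have := Fintype.card_range_le (w ∘ Fin.castSucc)
  rw [Fintype.card_fin] at this
  omega

section Embedding

variable {n d : ℕ} {b : Fin n → Fin d → ℝ} {t : Fin d → ℝ} {α : ℝ}

def embeddingBasis (b : Fin n → Fin d → ℝ) (t : Fin d → ℝ) (α : ℝ) :
    Fin (n + 1) → Fin (d + 1) → ℝ :=
  Fin.snoc (fun i => Fin.snoc (b i) 0) (Fin.snoc t α)

lemma sum_smul_embeddingBasis (c : Fin (n + 1) → ℝ) :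
    ∑ k, c k • embeddingBasis b t α k =
      Fin.snoc (∑ k : Fin n, c k.castSucc • b k + c (Fin.last n) • t) (c (Fin.last n) * α) := by
  ext j
  induction j using Fin.lastCases <;>
    simp [embeddingBasis, Fin.sum_univ_castSucc, Finset.sum_apply]

lemma linearIndependent_embeddingBasis (hb : LinearIndependent ℝ b) (hα : α ≠ 0) :
    LinearIndependent ℝ (embeddingBasis b t α) := by
  rw [Fintype.linearIndependent_iff] at hb ⊢
  intro c hc
  rw [sum_smul_embeddingBasis] at hc
  have hlast : c (Fin.last n) = 0 := by
    simpa [hα] using congrFun hc (Fin.last d)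
  have hinit : ∀ k : Fin n, c k.castSucc = 0 := by
    refine hb _ (funext fun j => ?_)
    simpa [hlast] using congrFun hc j.castSucc
  intro k
  induction k using Fin.lastCases with
  | last => exact hlast
  | cast k => exact hinit k

variable {p ρ : ℝ}

lemma min_le_lpNorm_snoc_rpow (hp : 0 < p) (hρ : 0 ≤ ρ) (hα : 0 ≤ α)
    (hfar : ∀ v, inLattice b v → ρ < lpNorm p (v - t)) {v : Fin d → ℝ} (hv : inLattice b v)
    {m : ℤ} (hm : m ≠ 0) :
    min (ρ ^ p + α ^ p) (2 ^ p * α ^ p) ≤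
      lpNorm p (Fin.snoc (v + (m : ℝ) • t) ((m : ℝ) * α) : Fin (d + 1) → ℝ) ^ p := by
  rw [lpNorm_snoc_rpow hp.ne', abs_mul, abs_of_nonneg hα]
  obtain rfl | rfl | h2 : m = 1 ∨ m = -1 ∨ 2 ≤ |m| := by cases abs_cases m <;> omega
  · refine min_le_of_left_le ?_
    have hfar' : ρ < lpNorm p (v + t) := by
      simpa [← lpNorm_neg (v + t), neg_add_eq_sub] using hfar _ hv.neg
    simpa using (Real.rpow_lt_rpow hρ hfar' hp).le
  · refine min_le_of_left_le ?_
    simpa [← sub_eq_add_neg] using (Real.rpow_lt_rpow hρ (hfar v hv) hp).le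
  · refine min_le_of_right_le ?_
    have h2' : (2 : ℝ) ≤ |(m : ℝ)| := by rw [← Int.cast_abs]; exact_mod_cast h2
    calc 2 ^ p * α ^ p = (2 * α) ^ p := (Real.mul_rpow zero_le_two hα).symm
      _ ≤ (|(m : ℝ)| * α) ^ p := by gcongr
      _ ≤ _ := le_add_of_nonneg_left (Real.rpow_nonneg (lpNorm_nonneg _) p)

lemma exists_le_lpNorm_rpow_of_linearIndependent (hp : 0 < p) (hρ : 0 ≤ ρ) (hα : 0 ≤ α)
    (hfar : ∀ v, inLattice b v → ρ < lpNorm p (v - t))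
    (u : Fin (n + 1) → Fin (d + 1) → ℝ) (hu : LinearIndependent ℝ u)
    (hL : ∀ i, inLattice (embeddingBasis b t α) (u i)) :
    ∃ i, min (ρ ^ p + α ^ p) (2 ^ p * α ^ p) ≤ lpNorm p (u i) ^ p := by
  choose z hz using hL
  obtain ⟨i, hi⟩ := exists_coeff_last_ne_zero hu (fun i k => (z i k : ℝ)) hz
  refine ⟨i, ?_⟩
  rw [hz i, sum_smul_embeddingBasis]
  exact min_le_lpNorm_snoc_rpow hp hρ hα hfar ⟨fun k => z i k.castSucc, rfl⟩ (by exact_mod_cast hi)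

end Embedding

/-- NO case: if every `v ∈ L = L(b_1,…,b_n)` satisfies `‖v−t‖_p > γ·r`,
then every set of `n+1` linearly independent vectors of the lattice `L'` generated by
`(b_1,0), …, (b_n,0), (t,α)` contains a vector `x` with
`‖x‖_p^p ≥ min(γ^p r^p + α^p, 2^p α^p)`.  In particular
`λ_{n+1}^{(p)}(L')^p ≥ min(γ^p r^p + α^p, 2^p α^p)`. -/
theorem stmt7 (p γ r : ℝ) (hp : 1 ≤ p) (hγ : 1 ≤ γ) (hr : 0 < r) (n d : ℕ)
    (b : Fin n → Fin d → ℤ)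
    (hb : LinearIndependent ℝ (fun i : Fin n => fun j : Fin d => (b i j : ℝ)))
    (t : Fin d → ℤ) (α : ℝ) (hα : 0 < α)
    (w : Fin (n + 1) → Fin (d + 1) → ℝ)
    (hw : w = Fin.snoc (fun i : Fin n => Fin.snoc (fun j => (b i j : ℝ)) (0 : ℝ))
      (Fin.snoc (fun j => (t j : ℝ)) α))
    (hfar : ∀ v : Fin d → ℝ,
      inLattice (fun i : Fin n => fun j : Fin d => (b i j : ℝ)) v →
      γ * r < lpNorm p (v - fun j => (t j : ℝ))) :
    (∀ u : Fin (n + 1) → Fin (d + 1) → ℝ,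
      LinearIndependent ℝ u → (∀ i, inLattice w (u i)) →
      ∃ i, min (γ ^ p * r ^ p + α ^ p) (2 ^ p * α ^ p) ≤ lpNorm p (u i) ^ p) ∧
    min (γ ^ p * r ^ p + α ^ p) (2 ^ p * α ^ p) ≤ succMin p w (n + 1) ^ p := by
  have hp0 : 0 < p := by linarith
  have hρ : 0 ≤ γ * r := mul_nonneg (by linarith) hr.le
  rw [← Real.mul_rpow (by linarith) hr.le]
  subst hw
  have key := exists_le_lpNorm_rpow_of_linearIndependent
    (b := fun i j => (b i j : ℝ)) (t := fun j => (t j : ℝ)) hp0 hρ hα.le hfar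
  have hmin : 0 ≤ min ((γ * r) ^ p + α ^ p) (2 ^ p * α ^ p) :=
    le_min (add_nonneg (Real.rpow_nonneg hρ p) (Real.rpow_nonneg hα.le p)) (by positivity)
  exact ⟨key, le_succMin_rpow hp0 hmin
    ⟨_, linearIndependent_embeddingBasis hb hα.ne', inLattice_self⟩ key⟩
end

section
/- (Main reduction, NO case.) Let p ≥ 1, γ ≥ 1, r > 0, τ > 0, let b_1, …, b_n ∈ ℤ^d be linearly independent, let t ∈ ℤ^d, let L = L(b_1, …, b_n). Set α^p = max(r^p(τ − 1), γ^p r^p / (2^p − 1)) with α > 0, and let L' ⊂ ℝ^{d+1} be the lattice generated by (b_1, 0), …, (b_n, 0), (t, α). If every v ∈ L satisfies ‖v − t‖_p > γ·r, then every set of n+1 linearly independent vectors of L' contains a vector of ℓ_p norm at least (γ^p r^p + α^p)^{1/p}; that is, λ_{n+1}^{(p)}(L')^p ≥ γ^p r^p + α^p. -/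
open Module Submodule

/-- main reduction, NO case: set
`α^p = max(r^p(τ−1), γ^p r^p/(2^p−1))` with `α > 0`, and let `L'` be the lattice
generated by `(b_1,0), …, (b_n,0), (t,α)` (the family `w`).  If every `v ∈ L`
satisfies `‖v − t‖_p > γ·r`, then every set of `n+1` linearly independent vectors of
`L'` contains a vector of ℓ_p norm at least `(γ^p r^p + α^p)^{1/p}`; that is,
`λ_{n+1}^{(p)}(L')^p ≥ γ^p r^p + α^p`. -/
theorem stmt10 (p γ r τ : ℝ) (hp : 1 ≤ p) (hγ : 1 ≤ γ) (hr : 0 < r) (hτ : 0 < τ)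
    (n d : ℕ) (b : Fin n → Fin d → ℤ)
    (hb : LinearIndependent ℝ (fun i : Fin n => fun j : Fin d => (b i j : ℝ)))
    (t : Fin d → ℤ)
    (α : ℝ) (hα : 0 < α)
    (hαp : α ^ p = max (r ^ p * (τ - 1)) (γ ^ p * r ^ p / (2 ^ p - 1)))
    (w : Fin (n + 1) → Fin (d + 1) → ℝ)
    (hw : w = Fin.snoc (fun i : Fin n => Fin.snoc (fun j => (b i j : ℝ)) (0 : ℝ))
      (Fin.snoc (fun j => (t j : ℝ)) α))
    (hno : ∀ v : Fin d → ℝ,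
      inLattice (fun i : Fin n => fun j : Fin d => (b i j : ℝ)) v →
      γ * r < lpNorm p (v - fun j => (t j : ℝ))) :
    (∀ u : Fin (n + 1) → Fin (d + 1) → ℝ,
      LinearIndependent ℝ u → (∀ i, inLattice w (u i)) →
      ∃ i, (γ ^ p * r ^ p + α ^ p) ^ (1 / p) ≤ lpNorm p (u i)) ∧
    γ ^ p * r ^ p + α ^ p ≤ succMin p w (n + 1) ^ p := by
  have hp0 : (0:ℝ) < p := lt_of_lt_of_le one_pos hp
  have hγ0 : (0:ℝ) < γ := lt_of_lt_of_le one_pos hγ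
  have hγr : 0 < γ * r := mul_pos hγ0 hr
  have hC0 : (0:ℝ) < γ ^ p * r ^ p + α ^ p := by positivity
  have h2p : (2:ℝ) ≤ 2 ^ p := by
    have := Real.rpow_le_rpow_of_exponent_le (by norm_num : (1:ℝ) ≤ 2) hp
    rwa [Real.rpow_one] at this
  have hαγ : γ ^ p * r ^ p ≤ (2 ^ p - 1) * α ^ p := by
    have h1 : γ ^ p * r ^ p / (2 ^ p - 1) ≤ α ^ p := hαp ▸ le_max_right _ _
    rw [div_le_iff₀ (by linarith)] at h1
    linarith [h1]
  -- main claim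
  have main : ∀ u : Fin (n + 1) → Fin (d + 1) → ℝ,
      LinearIndependent ℝ u → (∀ i, inLattice w (u i)) →
      ∃ i, γ ^ p * r ^ p + α ^ p ≤ ∑ k, |u i k| ^ p := by
    intro u hu hlat
    choose z hz using hlat
    have hcast : ∀ i (j : Fin d), u i j.castSucc
        = (∑ k : Fin n, (z i k.castSucc : ℝ) * (b k j : ℝ))
          + (z i (Fin.last n) : ℝ) * (t j : ℝ) := by
      intro i j
      have h := congrFun (hz i) j.castSucc
      rw [h]
      simp [hw, Fin.sum_univ_castSucc, Finset.sum_apply]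
    have hlastc : ∀ i, u i (Fin.last d) = (z i (Fin.last n) : ℝ) * α := by
      intro i
      have h := congrFun (hz i) (Fin.last d)
      rw [h]
      simp [hw, Fin.sum_univ_castSucc, Finset.sum_apply]
    have hex : ∃ i, z i (Fin.last n) ≠ 0 := by
      by_contra hcon
      push_neg at hcon
      have hmem : ∀ i, u i ∈ span ℝ (Set.range fun k : Fin n => w k.castSucc) := by
        intro i
        rw [hz i, Fin.sum_univ_castSucc, hcon i]
        simp only [Int.cast_zero, zero_smul, add_zero]
        exact sum_mem fun k _ => smul_mem _ _ (subset_span ⟨k, rfl⟩)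
      have h2 : span ℝ (Set.range u) ≤ span ℝ (Set.range fun k : Fin n => w k.castSucc) :=
        span_le.mpr (Set.range_subset_iff.mpr hmem)
      have h3 := Submodule.finrank_mono h2
      rw [finrank_span_eq_card hu, Fintype.card_fin] at h3
      have h4 := finrank_range_le_card (R := ℝ) (fun k : Fin n => w k.castSucc)
      rw [Set.finrank, Fintype.card_fin] at h4
      omega
    obtain ⟨i, hi⟩ := hex
    refine ⟨i, ?_⟩
    set c : ℤ := z i (Fin.last n) with hc
    have hsplit : ∑ k : Fin (d+1), |u i k| ^ p
        = (∑ j : Fin d, |u i j.castSucc| ^ p) + |(c:ℝ) * α| ^ p := by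
      rw [Fin.sum_univ_castSucc, hlastc i]
    rcases lt_or_ge |c| 2 with hcase | hcase
    · -- |c| = 1
      have hc1 : c = 1 ∨ c = -1 := by
        obtain ⟨h1, h2⟩ := abs_lt.mp hcase
        omega
      have hcsq : (c:ℝ) * (c:ℝ) = 1 := by rcases hc1 with h | h <;> simp [h]
      have hcabs : |(c:ℝ)| = 1 := by rcases hc1 with h | h <;> simp [h]
      set v : Fin d → ℝ := fun j => ∑ k : Fin n, ((-c * z i k.castSucc : ℤ) : ℝ) * (b k j : ℝ)
        with hv
      have hvL : inLattice (fun i : Fin n => fun j : Fin d => (b i j : ℝ)) v := by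
        refine ⟨fun k => -c * z i k.castSucc, ?_⟩
        funext j
        simp [hv, Finset.sum_apply]
      have hvt : ∀ j : Fin d, (v - fun j => (t j : ℝ)) j = (-(c:ℝ)) * u i j.castSucc := by
        intro j
        have hsum : ∑ k : Fin n, ((-c * z i k.castSucc : ℤ):ℝ) * (b k j:ℝ)
            = -(c:ℝ) * ∑ k : Fin n, (z i k.castSucc:ℝ) * (b k j:ℝ) := by
          rw [Finset.mul_sum]
          exact Finset.sum_congr rfl fun k _ => by push_cast; ring
        rw [Pi.sub_apply, hcast i j]
        simp only [hv]
        rw [hsum]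
        linear_combination ((t j : ℝ)) * hcsq
      have habs : ∀ j : Fin d, |(v - fun j => (t j : ℝ)) j| = |u i j.castSucc| := by
        intro j
        rw [hvt j, abs_mul, abs_neg, hcabs, one_mul]
      have hlt := hno v hvL
      have hsum : (γ * r) ^ p < ∑ j : Fin d, |u i j.castSucc| ^ p := by
        have h1 : (γ * r) ^ p < lpNorm p (v - fun j => (t j : ℝ)) ^ p :=
          Real.rpow_lt_rpow (le_of_lt hγr) hlt hp0
        have h2 : lpNorm p (v - fun j => (t j : ℝ)) ^ p
            = ∑ j : Fin d, |(v - fun j => (t j : ℝ)) j| ^ p := by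
          rw [lpNorm, one_div]
          exact Real.rpow_inv_rpow (Finset.sum_nonneg fun j _ => by positivity) (ne_of_gt hp0)
        rw [h2] at h1
        calc (γ * r) ^ p < ∑ j : Fin d, |(v - fun j => (t j : ℝ)) j| ^ p := h1
          _ = ∑ j : Fin d, |u i j.castSucc| ^ p := by
              exact Finset.sum_congr rfl fun j _ => by rw [habs j]
      have hgr : (γ * r) ^ p = γ ^ p * r ^ p := Real.mul_rpow (le_of_lt hγ0) (le_of_lt hr)
      have hca : |(c:ℝ) * α| ^ p = α ^ p := by
        rw [abs_mul, hcabs, one_mul, abs_of_pos hα]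
      rw [hsplit, hca]
      rw [hgr] at hsum
      linarith
    · -- |c| ≥ 2
      have h2α : (2 * α) ^ p ≤ |(c:ℝ) * α| ^ p := by
        apply Real.rpow_le_rpow (by positivity) _ (le_of_lt hp0)
        rw [abs_mul, abs_of_pos hα]
        have : (2:ℝ) ≤ |(c:ℝ)| := by
          rw [← Int.cast_abs]
          exact_mod_cast hcase
        nlinarith [hα]
      have h2αp : (2 * α) ^ p = 2 ^ p * α ^ p := Real.mul_rpow (by norm_num) (le_of_lt hα)
      have hnn : (0:ℝ) ≤ ∑ j : Fin d, |u i j.castSucc| ^ p :=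
        Finset.sum_nonneg fun j _ => by positivity
      rw [hsplit]
      have : γ ^ p * r ^ p + α ^ p ≤ 2 ^ p * α ^ p := by linarith
      linarith [h2α, h2αp ▸ this]
  have hlpnn : ∀ {m : ℕ} (x : Fin m → ℝ), 0 ≤ lpNorm p x := by
    intro m x
    exact Real.rpow_nonneg (Finset.sum_nonneg fun j _ => by positivity) _
  have mainlp : ∀ u : Fin (n + 1) → Fin (d + 1) → ℝ,
      LinearIndependent ℝ u → (∀ i, inLattice w (u i)) →
      ∃ i, (γ ^ p * r ^ p + α ^ p) ^ (1 / p) ≤ lpNorm p (u i) := by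
    intro u hu hlat
    obtain ⟨i, hi⟩ := main u hu hlat
    exact ⟨i, Real.rpow_le_rpow (le_of_lt hC0) hi (by positivity)⟩
  refine ⟨mainlp, ?_⟩
  -- succMin part
  have hwli : LinearIndependent ℝ w := by
    rw [Fintype.linearIndependent_iff]
    intro g hg
    have hlast : g (Fin.last n) = 0 := by
      have h := congrFun hg (Fin.last d)
      simp [hw, Fin.sum_univ_castSucc, Finset.sum_apply] at h
      rcases h with h | h
      · exact h
      · exact absurd h (ne_of_gt hα)
    have h0 : ∑ k : Fin n, g k.castSucc • (fun j : Fin d => (b k j : ℝ)) = 0 := by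
      funext j
      have h := congrFun hg j.castSucc
      simp [hw, Fin.sum_univ_castSucc, Finset.sum_apply, hlast] at h
      simpa [Finset.sum_apply] using h
    have hrest := Fintype.linearIndependent_iff.mp hb _ h0
    intro i
    induction i using Fin.lastCases with
    | last => exact hlast
    | cast k => exact hrest k
  have hwmem : ∀ i, inLattice w (w i) := by
    intro i
    refine ⟨fun k => if k = i then 1 else 0, ?_⟩
    simp [Finset.sum_ite_eq', apply_ite]
  set S := {ℓ : ℝ | ∃ v : Fin (n+1) → Fin (d+1) → ℝ,
    LinearIndependent ℝ v ∧ (∀ i, inLattice w (v i)) ∧ ∀ i, lpNorm p (v i) ≤ ℓ} with hS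
  have hne : S.Nonempty := by
    refine ⟨∑ i, lpNorm p (w i), w, hwli, hwmem, fun i => ?_⟩
    exact Finset.single_le_sum (fun j _ => hlpnn (w j)) (Finset.mem_univ i)
  have hbdd : ∀ ℓ ∈ S, (γ ^ p * r ^ p + α ^ p) ^ (1 / p) ≤ ℓ := by
    rintro ℓ ⟨v, hvli, hvmem, hvb⟩
    obtain ⟨i, hi⟩ := mainlp v hvli hvmem
    exact le_trans hi (hvb i)
  have hinf : (γ ^ p * r ^ p + α ^ p) ^ (1 / p) ≤ sInf S := le_csInf hne hbdd
  have : ((γ ^ p * r ^ p + α ^ p) ^ (1 / p)) ^ p ≤ sInf S ^ p :=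
    Real.rpow_le_rpow (by positivity) hinf (le_of_lt hp0)
  rwa [one_div, Real.rpow_inv_rpow (le_of_lt hC0) (ne_of_gt hp0)] at this
end

section
/- (Garey–Johnson gap-preserving 3SAT-to-2SAT transformation, combinatorial core.) For every Boolean formula φ in conjunctive normal form with exactly 3 literals per clause, over n variables and with m clauses, there exists a Boolean formula ψ in conjunctive normal form with exactly 2 literals per clause, over n + m variables and with 10m clauses, such that for every real ε ∈ [0, 1]: some assignment satisfies at least ε·m clauses of φ if and only if some assignment satisfies at least ((6 + ε)/10)·(10m) = (6 + ε)·m clauses of ψ. -/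
/-- A clause with exactly `k` literals over the variable set `V`: each literal is a
variable together with its polarity (`true` = positive occurrence). -/
def clauseSat {V : Type*} {k : ℕ} (a : V → Bool) (C : Fin k → V × Bool) : Prop :=
  ∃ j : Fin k, a (C j).1 = (C j).2

instance {V : Type*} {k : ℕ} (a : V → Bool) (C : Fin k → V × Bool) :
    Decidable (clauseSat a C) := by unfold clauseSat; infer_instance

/-- The number of clauses of the kCNF formula `φ` (a finite sequence of `m` clauses,
each with exactly `k` literals) satisfied by the assignment `a`. -/
noncomputable def satCount {V : Type*} {k m : ℕ} (a : V → Bool)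
    (φ : Fin m → Fin k → V × Bool) : ℕ :=
  (Finset.univ.filter fun i : Fin m => clauseSat a (φ i)).card

def cnt (b : Bool) : ℕ := if b then 1 else 0

def N (b0 b1 b2 w : Bool) : ℕ :=
  cnt b0 + cnt b1 + cnt b2 + cnt (!b0 || !b1) + cnt (!b0 || !b2) + cnt (!b1 || !b2)
    + cnt w + cnt (b0 || !w) + cnt (b1 || !w) + cnt (b2 || !w)

lemma N_le : ∀ (b0 b1 b2 w : Bool), N b0 b1 b2 w ≤ 6 + cnt (b0 || b1 || b2) := by decide

lemma N_ex : ∀ (b0 b1 b2 : Bool), ∃ w, 6 + cnt (b0 || b1 || b2) ≤ N b0 b1 b2 w := by decide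

lemma ite_cnt {P : Prop} [Decidable P] {b : Bool} (h : P ↔ b = true) :
    (if P then 1 else 0) = cnt b := by simp [cnt, h]

lemma clauseSat2 {V : Type*} (a : V → Bool) (A B : V × Bool) :
    clauseSat a ![A, B] ↔ ((a A.1 == A.2) || (a B.1 == B.2)) = true := by
  unfold clauseSat
  constructor
  · rintro ⟨j, h⟩; fin_cases j <;> simp_all
  · intro h
    simp only [Bool.or_eq_true, beq_iff_eq] at h
    rcases h with h | h
    · exact ⟨0, h⟩
    · exact ⟨1, h⟩

lemma clauseSat3 {V : Type*} (a : V → Bool) (C : Fin 3 → V × Bool) :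
    clauseSat a C ↔
      ((a (C 0).1 == (C 0).2) || (a (C 1).1 == (C 1).2) || (a (C 2).1 == (C 2).2)) = true := by
  unfold clauseSat
  constructor
  · rintro ⟨j, h⟩; fin_cases j <;> simp_all
  · intro h
    simp only [Bool.or_eq_true, beq_iff_eq] at h
    rcases h with (h | h) | h
    exacts [⟨0, h⟩, ⟨1, h⟩, ⟨2, h⟩]

/-- The Garey–Johnson gadget: 10 two-literal clauses for the `i`-th 3-clause. -/
def gadget {n m : ℕ} (φ : Fin m → Fin 3 → Fin n × Bool) (i : Fin m) :
    Fin 10 → Fin 2 → Fin (n + m) × Bool :=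
  let L : Fin 3 → Fin (n + m) × Bool := fun j => ((φ i j).1.castAdd m, (φ i j).2)
  let Ln : Fin 3 → Fin (n + m) × Bool := fun j => ((φ i j).1.castAdd m, !(φ i j).2)
  let W : Fin (n + m) × Bool := (Fin.natAdd n i, true)
  let Wn : Fin (n + m) × Bool := (Fin.natAdd n i, false)
  ![![L 0, L 0], ![L 1, L 1], ![L 2, L 2],
    ![Ln 0, Ln 1], ![Ln 0, Ln 2], ![Ln 1, Ln 2],
    ![W, W], ![L 0, Wn], ![L 1, Wn], ![L 2, Wn]]

lemma neg_lit (x p : Bool) : x = !p ↔ (!(x == p)) = true := by cases x <;> cases p <;> simp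

lemma pos_lit (x p : Bool) : x = p ↔ (x == p) = true := by simp

lemma gadget_count {n m : ℕ} (φ : Fin m → Fin 3 → Fin n × Bool) (i : Fin m)
    (a' : Fin (n + m) → Bool) :
    (∑ t : Fin 10, if clauseSat a' (gadget φ i t) then 1 else 0) =
      N (a' ((φ i 0).1.castAdd m) == (φ i 0).2)
        (a' ((φ i 1).1.castAdd m) == (φ i 1).2)
        (a' ((φ i 2).1.castAdd m) == (φ i 2).2)
        (a' (Fin.natAdd n i)) := by
  set b0 := (a' ((φ i 0).1.castAdd m) == (φ i 0).2) with hb0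
  set b1 := (a' ((φ i 1).1.castAdd m) == (φ i 1).2) with hb1
  set b2 := (a' ((φ i 2).1.castAdd m) == (φ i 2).2) with hb2
  set w := a' (Fin.natAdd n i) with hw
  simp only [Fin.sum_univ_succ, Finset.univ_unique, Finset.sum_singleton]
  simp only [gadget, Matrix.cons_val_zero, Matrix.cons_val_one, Matrix.head_cons,
    Matrix.cons_val_succ]
  have beq_not : ∀ x p : Bool, (x == !p) = !(x == p) := by decide
  simp only [Matrix.cons_val_fin_one, clauseSat2, beq_not, beq_true, beq_false]
  simp only [N, cnt, ← hb0, ← hb1, ← hb2, ← hw, Bool.or_eq_true, Bool.not_eq_true',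
    Bool.or_self]
  ring

lemma satCount_eq_sum_cnt3 {n' m : ℕ} (a : Fin n' → Bool) (φ : Fin m → Fin 3 → Fin n' × Bool) :
    satCount a φ = ∑ i : Fin m,
      cnt ((a (φ i 0).1 == (φ i 0).2) || (a (φ i 1).1 == (φ i 1).2) ||
        (a (φ i 2).1 == (φ i 2).2)) := by
  unfold satCount
  rw [Finset.card_filter]
  exact Finset.sum_congr rfl fun i _ => ite_cnt (clauseSat3 a (φ i))

lemma satCount_psi {n m : ℕ} (φ : Fin m → Fin 3 → Fin n × Bool) (a' : Fin (n + m) → Bool) :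
    satCount a' (fun q : Fin (10 * m) =>
        gadget φ (finProdFinEquiv.symm q).2 (finProdFinEquiv.symm q).1) =
      ∑ i : Fin m,
        N (a' ((φ i 0).1.castAdd m) == (φ i 0).2)
          (a' ((φ i 1).1.castAdd m) == (φ i 1).2)
          (a' ((φ i 2).1.castAdd m) == (φ i 2).2)
          (a' (Fin.natAdd n i)) := by
  unfold satCount
  rw [Finset.card_filter]
  rw [← Equiv.sum_comp (finProdFinEquiv : Fin 10 × Fin m ≃ Fin (10 * m))]
  simp only [Equiv.symm_apply_apply]
  rw [Fintype.sum_prod_type, Finset.sum_comm]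
  exact Finset.sum_congr rfl fun i _ => gadget_count φ i a'

lemma psi_upper {n m : ℕ} (φ : Fin m → Fin 3 → Fin n × Bool) (a' : Fin (n + m) → Bool) :
    satCount a' (fun q : Fin (10 * m) =>
        gadget φ (finProdFinEquiv.symm q).2 (finProdFinEquiv.symm q).1) ≤
      6 * m + satCount (fun x => a' (x.castAdd m)) φ := by
  rw [satCount_psi, satCount_eq_sum_cnt3]
  calc (∑ i : Fin m, N (a' ((φ i 0).1.castAdd m) == (φ i 0).2)
          (a' ((φ i 1).1.castAdd m) == (φ i 1).2)
          (a' ((φ i 2).1.castAdd m) == (φ i 2).2) (a' (Fin.natAdd n i)))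
      ≤ ∑ i : Fin m, (6 + cnt ((a' ((φ i 0).1.castAdd m) == (φ i 0).2) ||
          (a' ((φ i 1).1.castAdd m) == (φ i 1).2) ||
          (a' ((φ i 2).1.castAdd m) == (φ i 2).2))) :=
        Finset.sum_le_sum fun i _ => N_le _ _ _ _
    _ = 6 * m + _ := by
        rw [Finset.sum_add_distrib, Finset.sum_const, Finset.card_univ, Fintype.card_fin,
          smul_eq_mul]
        ring

/-- Garey–Johnson gap-preserving 3SAT-to-2SAT transformation,
combinatorial core: for every 3CNF formula `φ` over `n` variables with `m` clauses
there is a 2CNF formula `ψ` over `n + m` variables with `10·m` clauses such that for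
every `ε ∈ [0,1]`: some assignment satisfies at least `ε·m` clauses of `φ` iff some
assignment satisfies at least `(6 + ε)·m` clauses of `ψ`. -/
theorem stmt12 (n m : ℕ) (φ : Fin m → Fin 3 → Fin n × Bool) :
    ∃ ψ : Fin (10 * m) → Fin 2 → Fin (n + m) × Bool,
      ∀ ε : ℝ, 0 ≤ ε → ε ≤ 1 →
        ((∃ a : Fin n → Bool, ε * m ≤ (satCount a φ : ℝ)) ↔
          (∃ a' : Fin (n + m) → Bool, (6 + ε) * m ≤ (satCount a' ψ : ℝ))) := by
  refine ⟨fun q => gadget φ (finProdFinEquiv.symm q).2 (finProdFinEquiv.symm q).1, ?_⟩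
  intro ε hε0 hε1
  constructor
  · rintro ⟨a, ha⟩
    choose wf hwf using fun i : Fin m =>
      N_ex (a (φ i 0).1 == (φ i 0).2) (a (φ i 1).1 == (φ i 1).2) (a (φ i 2).1 == (φ i 2).2)
    set a' : Fin (n + m) → Bool := fun v => Sum.elim a wf (finSumFinEquiv.symm v) with ha'
    have hcast : ∀ x : Fin n, a' (Fin.castAdd m x) = a x := by
      intro x; simp [ha', finSumFinEquiv_symm_apply_castAdd]
    have hnat : ∀ i : Fin m, a' (Fin.natAdd n i) = wf i := by
      intro i; simp [ha', finSumFinEquiv_symm_apply_natAdd]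
    refine ⟨a', ?_⟩
    have key : 6 * m + satCount a φ ≤ satCount a' (fun q : Fin (10 * m) =>
        gadget φ (finProdFinEquiv.symm q).2 (finProdFinEquiv.symm q).1) := by
      rw [satCount_psi, satCount_eq_sum_cnt3]
      simp only [hcast, hnat]
      calc 6 * m + ∑ i : Fin m, cnt ((a (φ i 0).1 == (φ i 0).2) ||
              (a (φ i 1).1 == (φ i 1).2) || (a (φ i 2).1 == (φ i 2).2))
          = ∑ i : Fin m, (6 + cnt ((a (φ i 0).1 == (φ i 0).2) ||
              (a (φ i 1).1 == (φ i 1).2) || (a (φ i 2).1 == (φ i 2).2))) := by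
            rw [Finset.sum_add_distrib, Finset.sum_const, Finset.card_univ, Fintype.card_fin,
              smul_eq_mul]
            ring
        _ ≤ _ := Finset.sum_le_sum fun i _ => hwf i
    have key' := (Nat.cast_le (α := ℝ)).mpr key
    push_cast at key'
    nlinarith [ha, key']
  · rintro ⟨a', ha'⟩
    refine ⟨fun x => a' (x.castAdd m), ?_⟩
    have key := psi_upper φ a'
    have key' : (satCount a' (fun q : Fin (10 * m) =>
        gadget φ (finProdFinEquiv.symm q).2 (finProdFinEquiv.symm q).1) : ℝ) ≤
        6 * m + satCount (fun x => a' (x.castAdd m)) φ := by exact_mod_cast Nat.cast_le.mpr key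
    nlinarith [ha', key']
end
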